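/- arXiv:1804.02811 — 3 statements merged into one kernel-verified Lean document; each statement's English description precedes it below -/
import Mathlib

section
/- Let p ≥ 1 and let γ : ℝ → ℝ^p be five times continuously differentiable on a neighborhood of 0 with ‖γ′(s)‖ = 1 for all s in that neighborhood. Set h(t) := ‖γ(t) − γ(0)‖. Then, as t → 0⁺, t = h(t) + (‖γ″(0)‖²/24)·h(t)³ + (⟨γ‴(0), γ″(0)⟩/24)·h(t)⁴ + O(t⁵). -/
/-!
Write `h = ‖γ t - γ 0‖`. Differentiating `‖γ'‖² = 1` three times gives `⟪γ'', γ'⟫ = 0`,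
`⟪γ''', γ'⟫ = -‖γ''‖²` and `⟪γ'''', γ'⟫ = -3⟪γ''', γ''⟫`, so squaring the Taylor expansion of
`γ t - γ 0` to order four yields `h² = t² - ‖γ''‖² t⁴ / 12 - ⟪γ''', γ''⟫ t⁵ / 12 + O(t⁶)`; the
`O(t⁵)` Taylor remainder only contributes `O(t⁶)` because the polynomial part is `O(t)`.
Inverting this expansion: first `h - t = O(t³)`, hence `h^k - t^k = O(t^(k+2))`, and multiplying the
claimed error by `h + t ≥ t` turns it into a combination of such differences.
-/

open Asymptotics Filter Topology
open scoped RealInnerProductSpace Nat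

section IteratedDeriv

variable {𝕜 F : Type*} [NontriviallyNormedField 𝕜] [NormedAddCommGroup F] [NormedSpace 𝕜 F]
  {f : 𝕜 → F} {s : Set 𝕜} {n : WithTop ℕ∞} {k : ℕ} {x : 𝕜}

lemma hasDerivAt_iteratedDeriv_of_contDiffOn (hs : IsOpen s) (hf : ContDiffOn 𝕜 n f s)
    (hk : k < n) (hx : x ∈ s) :
    HasDerivAt (iteratedDeriv k f) (iteratedDeriv (k + 1) f x) x := by
  have hdiff : DifferentiableAt 𝕜 (iteratedDerivWithin k f s) x :=
    (hf.differentiableOn_iteratedDerivWithin hk hs.uniqueDiffOn x hx).differentiableAt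
      (hs.mem_nhds hx)
  have heq : iteratedDerivWithin k f s =ᶠ[𝓝 x] iteratedDeriv k f :=
    eventually_of_mem (hs.mem_nhds hx) (iteratedDerivWithin_of_isOpen hs)
  rw [iteratedDeriv_succ]
  exact (hdiff.congr_of_eventuallyEq heq.symm).hasDerivAt

lemma hasDerivAt_deriv_of_contDiffOn (hs : IsOpen s) (hf : ContDiffOn 𝕜 n f s) (hn : 1 < n)
    (hx : x ∈ s) : HasDerivAt (deriv f) (iteratedDeriv 2 f x) x :=
  iteratedDeriv_one (f := f) ▸ hasDerivAt_iteratedDeriv_of_contDiffOn hs hf hn hx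

end IteratedDeriv

lemma sub_taylor_isBigO_of_contDiffOn {F : Type*} [NormedAddCommGroup F] [NormedSpace ℝ F]
    {f : ℝ → F} {s : Set ℝ} {x₀ : ℝ} {n : ℕ} (hs : s ∈ 𝓝 x₀) (hf : ContDiffOn ℝ (n + 1) f s) :
    (fun x => f x - ∑ k ∈ Finset.range (n + 1),
        ((k ! : ℝ)⁻¹ * (x - x₀) ^ k) • iteratedDeriv k f x₀) =O[𝓝 x₀]
      fun x => (x - x₀) ^ (n + 1) := by
  obtain ⟨ε, hε, hball⟩ := Metric.mem_nhds_iff.mp hs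
  have hx₀ := Metric.mem_ball_self (x := x₀) hε
  have hT := taylor_isLittleO (convex_ball x₀ ε) hx₀ (hf.mono hball)
  rw [nhdsWithin_eq_nhds.mpr (Metric.ball_mem_nhds x₀ hε)] at hT
  simp only [taylor_within_apply, Finset.sum_range_succ _ (n + 1),
    fun k => iteratedDerivWithin_of_isOpen (n := k) (f := f) Metric.isOpen_ball hx₀] at hT
  have hlast : (fun x => (((n + 1) ! : ℝ)⁻¹ * (x - x₀) ^ (n + 1)) • iteratedDeriv (n + 1) f x₀)
      =O[𝓝 x₀] fun x => (x - x₀) ^ (n + 1) :=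
    (((isBigO_refl _ _).const_mul_left _).smul (isBigO_const_const _ one_ne_zero _)).congr_right
      fun x => by simp
  exact (hT.isBigO.add hlast).congr_left fun x => by abel

lemma HasDerivAt.eq_zero_of_eqOn_const {g : ℝ → ℝ} {g' c x : ℝ} {s : Set ℝ} (hs : IsOpen s)
    (hg : ∀ y ∈ s, g y = c) (hx : x ∈ s) (hd : HasDerivAt g g' x) : g' = 0 :=
  hd.unique ((hasDerivAt_const x c).congr_of_eventuallyEq (eventually_of_mem (hs.mem_nhds hx) hg))

section InnerProduct

variable {E : Type*} [NormedAddCommGroup E] [InnerProductSpace ℝ E]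

lemma norm_sq_quartic_sub_isBigO {D₁ D₂ D₃ D₄ : E} (h₁₁ : ‖D₁‖ = 1) (h₂₁ : ⟪D₂, D₁⟫ = 0)
    (h₃₁ : ⟪D₃, D₁⟫ = -‖D₂‖ ^ 2) (h₄₁ : ⟪D₄, D₁⟫ = -(3 * ⟪D₃, D₂⟫)) :
    (fun t : ℝ => ‖t • D₁ + (t ^ 2 / 2) • D₂ + (t ^ 3 / 6) • D₃ + (t ^ 4 / 24) • D₄‖ ^ 2 -
        (t ^ 2 - ‖D₂‖ ^ 2 * t ^ 4 / 12 - ⟪D₃, D₂⟫ * t ^ 5 / 12)) =O[𝓝 0] fun t => t ^ 6 := by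
  set q : ℝ → ℝ := fun t =>
    ⟪D₄, D₂⟫ / 24 + ‖D₃‖ ^ 2 / 36 + t * ⟪D₄, D₃⟫ / 72 + t ^ 2 * ‖D₄‖ ^ 2 / 576
  have hq : q =O[𝓝 0] fun _ => (1 : ℝ) := (by fun_prop : Continuous q).continuousAt.isBigO
  refine ((isBigO_refl (fun t : ℝ => t ^ 6) _).mul hq).congr (fun t => ?_) fun t => mul_one _
  rw [← real_inner_self_eq_norm_sq]
  simp only [inner_add_left, inner_add_right, real_inner_smul_left, real_inner_smul_right]
  rw [real_inner_comm D₂ D₁, real_inner_comm D₃ D₁, real_inner_comm D₄ D₁,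
    real_inner_comm D₃ D₂, real_inner_comm D₄ D₂, real_inner_comm D₄ D₃, h₂₁, h₃₁, h₄₁]
  simp only [real_inner_self_eq_norm_sq, h₁₁, q]
  ring

lemma norm_add_sq_sub_norm_sq_isBigO {α : Type*} {l : Filter α} {u r : α → E} {f g : α → ℝ}
    (hu : u =O[l] f) (hr : r =O[l] g) (hgf : g =O[l] f) :
    (fun x => ‖u x + r x‖ ^ 2 - ‖u x‖ ^ 2) =O[l] fun x => f x * g x := by
  have hinner : (fun x => ⟪u x, r x⟫) =O[l] fun x => f x * g x :=
    (isBigO_of_le l fun x => by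
      simpa using abs_real_inner_le_norm (u x) (r x)).trans (hu.norm_left.mul hr.norm_left)
  have hsq : (fun x => ‖r x‖ ^ 2) =O[l] fun x => f x * g x :=
    (hr.norm_left.mul hr.norm_left).trans (hgf.mul (isBigO_refl g l)) |>.congr_left
      fun x => (sq _).symm
  exact ((hinner.const_mul_left 2).add hsq).congr_left fun x => by rw [norm_add_sq_real]; ring

section UnitSpeed

variable {γ : ℝ → E} {s : Set ℝ} {x : ℝ}

lemma inner_iteratedDeriv_two_deriv_of_unit_speed (hs : IsOpen s) (hγ : ContDiffOn ℝ 2 γ s)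
    (harc : ∀ y ∈ s, ‖deriv γ y‖ = 1) (hx : x ∈ s) :
    ⟪iteratedDeriv 2 γ x, deriv γ x⟫ = 0 := by
  have hd := hasDerivAt_deriv_of_contDiffOn hs hγ (by norm_num) hx
  have := (hd.inner ℝ hd).eq_zero_of_eqOn_const hs (c := 1) (fun y hy => by
    rw [real_inner_self_eq_norm_sq, harc y hy, one_pow]) hx
  rw [real_inner_comm] at this
  linarith

lemma inner_iteratedDeriv_three_deriv_of_unit_speed (hs : IsOpen s) (hγ : ContDiffOn ℝ 3 γ s)
    (harc : ∀ y ∈ s, ‖deriv γ y‖ = 1) (hx : x ∈ s) :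
    ⟪iteratedDeriv 3 γ x, deriv γ x⟫ = -‖iteratedDeriv 2 γ x‖ ^ 2 := by
  have hd₁ := hasDerivAt_deriv_of_contDiffOn hs hγ (by norm_num) hx
  have hd₂ : HasDerivAt (iteratedDeriv 2 γ) (iteratedDeriv 3 γ x) x :=
    hasDerivAt_iteratedDeriv_of_contDiffOn hs hγ (by norm_num) hx
  have := (hd₂.inner ℝ hd₁).eq_zero_of_eqOn_const hs (c := 0) (fun y hy =>
    inner_iteratedDeriv_two_deriv_of_unit_speed hs (hγ.of_le (by norm_num)) harc hy) hx
  rw [real_inner_self_eq_norm_sq] at this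
  linarith

lemma inner_iteratedDeriv_four_deriv_of_unit_speed (hs : IsOpen s) (hγ : ContDiffOn ℝ 4 γ s)
    (harc : ∀ y ∈ s, ‖deriv γ y‖ = 1) (hx : x ∈ s) :
    ⟪iteratedDeriv 4 γ x, deriv γ x⟫ = -(3 * ⟪iteratedDeriv 3 γ x, iteratedDeriv 2 γ x⟫) := by
  have hd₁ := hasDerivAt_deriv_of_contDiffOn hs hγ (by norm_num) hx
  have hd₂ : HasDerivAt (iteratedDeriv 2 γ) (iteratedDeriv 3 γ x) x :=
    hasDerivAt_iteratedDeriv_of_contDiffOn hs hγ (by norm_num) hx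
  have hd₃ : HasDerivAt (iteratedDeriv 3 γ) (iteratedDeriv 4 γ x) x :=
    hasDerivAt_iteratedDeriv_of_contDiffOn hs hγ (by norm_num) hx
  have := ((hd₃.inner ℝ hd₁).add (hd₂.norm_sq)).eq_zero_of_eqOn_const hs (c := 0)
    (fun y hy => by
      rw [Pi.add_apply,
        inner_iteratedDeriv_three_deriv_of_unit_speed hs (hγ.of_le (by norm_num)) harc hy,
        neg_add_cancel]) hx
  rw [real_inner_comm (iteratedDeriv 3 γ x)] at this
  linarith

end UnitSpeed

theorem norm_sub_sq_isBigO_of_unit_speed {γ : ℝ → E} {U : Set ℝ} (hU : U ∈ 𝓝 0)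
    (hγ : ContDiffOn ℝ 5 γ U) (harc : ∀ s ∈ U, ‖deriv γ s‖ = 1) :
    (fun t => ‖γ t - γ 0‖ ^ 2 - (t ^ 2 - ‖iteratedDeriv 2 γ 0‖ ^ 2 * t ^ 4 / 12 -
        ⟪iteratedDeriv 3 γ 0, iteratedDeriv 2 γ 0⟫ * t ^ 5 / 12)) =O[𝓝 0] fun t => t ^ 6 := by
  obtain ⟨s, hsU, hs, h0⟩ := mem_nhds_iff.mp hU
  have hγs := hγ.mono hsU
  have harcs : ∀ y ∈ s, ‖deriv γ y‖ = 1 := fun y hy => harc y (hsU hy)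
  set P : ℝ → E := fun t => t • deriv γ 0 + (t ^ 2 / 2) • iteratedDeriv 2 γ 0 +
    (t ^ 3 / 6) • iteratedDeriv 3 γ 0 + (t ^ 4 / 24) • iteratedDeriv 4 γ 0
  have hR : (fun t => γ t - γ 0 - P t) =O[𝓝 0] fun t => t ^ 5 := by
    refine (sub_taylor_isBigO_of_contDiffOn (n := 4) hU hγ).congr (fun t => ?_) fun t => by simp
    simp [Finset.sum_range_succ, P, Nat.factorial, div_eq_inv_mul, sub_sub, add_assoc]
  have hP : P =O[𝓝 0] fun t => t := by
    simpa [P] using (by fun_prop : Differentiable ℝ P).differentiableAt.isBigO_sub (x₀ := 0)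
  have hquartic := norm_sq_quartic_sub_isBigO (harc 0 (mem_of_mem_nhds hU))
    (inner_iteratedDeriv_two_deriv_of_unit_speed hs (hγs.of_le (by norm_num)) harcs h0)
    (inner_iteratedDeriv_three_deriv_of_unit_speed hs (hγs.of_le (by norm_num)) harcs h0)
    (inner_iteratedDeriv_four_deriv_of_unit_speed hs (hγs.of_le (by norm_num)) harcs h0)
  have hcross := norm_add_sq_sub_norm_sq_isBigO hP hR
    (by simpa using (isLittleO_pow_pow (𝕜 := ℝ) (by norm_num : 1 < 5)).isBigO)
  exact ((hcross.congr_right fun t => by ring).add hquartic).congr_left fun t => by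
    simp only [add_sub_cancel]; ring

end InnerProduct

namespace Asymptotics

lemma pow_isBigO_pow_of_le {m n : ℕ} (hnm : n ≤ m) :
    (fun t : ℝ => t ^ m) =O[𝓝[>] 0] fun t => t ^ n := by
  rcases hnm.eq_or_lt with rfl | hlt
  · exact isBigO_refl _ _
  · exact (isLittleO_pow_pow hlt).isBigO.mono nhdsWithin_le_nhds

lemma isBigO_pow_of_mul_isBigO_pow_succ {v w : ℝ → ℝ} {n : ℕ}
    (hw : ∀ᶠ t in 𝓝[>] 0, t ≤ w t)
    (hvw : (fun t => v t * w t) =O[𝓝[>] 0] fun t => t ^ (n + 1)) :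
    v =O[𝓝[>] 0] fun t => t ^ n := by
  obtain ⟨C, hC⟩ := hvw.bound
  refine IsBigO.of_bound C ?_
  filter_upwards [hC, hw, self_mem_nhdsWithin] with t hvwt hwt (ht : 0 < t)
  have : ‖v t‖ * t ≤ C * ‖t ^ n‖ * t := calc
    ‖v t‖ * t ≤ ‖v t‖ * ‖w t‖ := by gcongr; exact hwt.trans (Real.le_norm_self _)
    _ = ‖v t * w t‖ := (norm_mul _ _).symm
    _ ≤ C * ‖t ^ (n + 1)‖ := hvwt
    _ = C * ‖t ^ n‖ * t := by rw [pow_succ, norm_mul, Real.norm_of_nonneg ht.le, mul_assoc]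
  exact le_of_mul_le_mul_right this ht

variable {h : ℝ → ℝ}

lemma sub_isBigO_of_sq_sub_sq_isBigO (hh : ∀ t, 0 ≤ h t)
    (hsq : (fun t => h t ^ 2 - t ^ 2) =O[𝓝[>] 0] fun t => t ^ 4) :
    (fun t => h t - t) =O[𝓝[>] 0] fun t => t ^ 3 :=
  isBigO_pow_of_mul_isBigO_pow_succ (w := fun t => h t + t)
    (Eventually.of_forall fun t => le_add_of_nonneg_left (hh t))
    (hsq.congr_left fun t => by ring)

lemma pow_sub_pow_isBigO_of_sub_isBigO
    (hsub : (fun t => h t - t) =O[𝓝[>] 0] fun t => t ^ 3) (k : ℕ) :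
    (fun t => h t ^ k - t ^ k) =O[𝓝[>] 0] fun t => t ^ (k + 2) := by
  have hcube : (fun t : ℝ => t ^ 3) =O[𝓝[>] 0] fun t => t := by
    simpa using pow_isBigO_pow_of_le (by norm_num : 1 ≤ 3)
  have hlin : h =O[𝓝[>] 0] fun t => t :=
    ((hsub.trans hcube).add (isBigO_refl _ _)).congr_left fun t => by ring
  induction k with
  | zero => simpa using isBigO_zero _ _
  | succ k ih =>
    have h₁ : (fun t => h t ^ k * (h t - t)) =O[𝓝[>] 0] fun t => t ^ (k + 1 + 2) :=
      ((hlin.pow k).mul hsub).congr_right fun t => by ring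
    have h₂ : (fun t => t * (h t ^ k - t ^ k)) =O[𝓝[>] 0] fun t => t ^ (k + 1 + 2) :=
      ((isBigO_refl _ _).mul ih).congr_right fun t => by ring
    exact (h₁.add h₂).congr_left fun t => by ring


lemma sub_inverse_expansion_isBigO (a b : ℝ) (hh : ∀ t, 0 ≤ h t)
    (hsq : (fun t => h t ^ 2 - (t ^ 2 - a * t ^ 4 / 12 - b * t ^ 5 / 12)) =O[𝓝[>] 0]
      fun t => t ^ 6) :
    (fun t => t - (h t + a / 24 * h t ^ 3 + b / 24 * h t ^ 4)) =O[𝓝[>] 0] fun t => t ^ 5 := by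
  have hsq' : (fun t => h t ^ 2 - t ^ 2) =O[𝓝[>] 0] fun t => t ^ 4 := by
    have ha := (isBigO_refl (fun t : ℝ => t ^ 4) (𝓝[>] 0)).const_mul_left (-a / 12)
    have hb := (pow_isBigO_pow_of_le (by norm_num : 4 ≤ 5)).const_mul_left (-b / 12)
    exact ((hsq.trans (pow_isBigO_pow_of_le (by norm_num))).add (ha.add hb)).congr_left
      fun t => by ring
  have hpow := pow_sub_pow_isBigO_of_sub_isBigO (sub_isBigO_of_sq_sub_sq_isBigO hh hsq')
  have h₃ : (fun t => t * (h t ^ 3 - t ^ 3) + (h t ^ 4 - t ^ 4)) =O[𝓝[>] 0]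
      fun t => t ^ 6 :=
    (((isBigO_refl _ _).mul (hpow 3)).congr_right fun t => by ring).add (hpow 4)
  have h₄ : (fun t => t * (h t ^ 4 - t ^ 4) + (h t ^ 5 - t ^ 5)) =O[𝓝[>] 0]
      fun t => t ^ 6 :=
    ((((isBigO_refl _ _).mul (hpow 4)).congr_right fun t => by ring).add (hpow 5)).trans
      (pow_isBigO_pow_of_le (by norm_num))
  refine isBigO_pow_of_mul_isBigO_pow_succ (w := fun t => h t + t)
    (Eventually.of_forall fun t => le_add_of_nonneg_left (hh t)) ?_
  exact (((h₃.const_mul_left (-a / 24)).add (h₄.const_mul_left (-b / 24))).sub hsq).congr_left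
    fun t => by ring

end Asymptotics

theorem geodesic_distance_from_euclidean_distance_expansion_general
    (p : ℕ) (γ : ℝ → EuclideanSpace ℝ (Fin p))
    (U : Set ℝ) (hU : U ∈ 𝓝 (0 : ℝ)) (hγ : ContDiffOn ℝ 5 γ U)
    (harc : ∀ s ∈ U, ‖deriv γ s‖ = 1) :
    (fun t : ℝ => t -
        (‖γ t - γ 0‖ + (‖iteratedDeriv 2 γ 0‖ ^ 2 / 24) * ‖γ t - γ 0‖ ^ 3
          + (⟪iteratedDeriv 3 γ 0, iteratedDeriv 2 γ 0⟫ / 24) * ‖γ t - γ 0‖ ^ 4))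
      =O[𝓝[>] (0 : ℝ)] fun t => t ^ 5 :=
  sub_inverse_expansion_isBigO _ _ (fun _ => norm_nonneg _)
    ((norm_sub_sq_isBigO_of_unit_speed hU hγ harc).mono nhdsWithin_le_nhds)

/-- For a unit-speed (arc-length parametrized) `C^5` curve
`γ : ℝ → ℝ^p` near `0`, with `h(t) := ‖γ(t) − γ(0)‖`, as `t → 0⁺`,
`t = h(t) + (‖γ″(0)‖²/24)·h(t)³ + (⟨γ‴(0), γ″(0)⟩/24)·h(t)⁴ + O(t⁵)`. -/
theorem geodesic_distance_from_euclidean_distance_expansion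
    (p : ℕ) (hp : 1 ≤ p) (γ : ℝ → EuclideanSpace ℝ (Fin p))
    (U : Set ℝ) (hU : U ∈ 𝓝 (0 : ℝ)) (hγ : ContDiffOn ℝ 5 γ U)
    (harc : ∀ s ∈ U, ‖deriv γ s‖ = 1) :
    (fun t : ℝ => t -
        (‖γ t - γ 0‖ + (‖iteratedDeriv 2 γ 0‖ ^ 2 / 24) * ‖γ t - γ 0‖ ^ 3
          + (⟪iteratedDeriv 3 γ 0, iteratedDeriv 2 γ 0⟫ / 24) * ‖γ t - γ 0‖ ^ 4))
      =O[𝓝[>] (0 : ℝ)] fun t => t ^ 5 :=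
  geodesic_distance_from_euclidean_distance_expansion_general p γ U hU hγ harc
end

section
/- Let d ≥ 1, let Ω ⊆ ℝ^d be open, let x ∈ Ω, and let f, P : Ω → ℝ be three times continuously differentiable. Then, as h → 0⁺, ∫_{B_h(x)} (f(y) − f(x))·P(y) dy = (|S^{d-1}|/(d(d+2)))·( (1/2)·P(x)·Δf(x) + ⟨∇f(x), ∇P(x)⟩ )·h^{d+2} + O(h^{d+3}). -/
open Asymptotics Filter Topology MeasureTheory Metric
open scoped RealInnerProductSpace

/-- The surface measure `|S^{d-1}|` of the unit sphere in `ℝ^d`. -/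
noncomputable def sphereArea (d : ℕ) : ℝ :=
  (((volume : Measure (EuclideanSpace ℝ (Fin d))).toSphere) Set.univ).toReal

/-- The Euclidean Laplacian `Δf(x) = ∑ i ∂²f/∂x_i²(x)`. -/
noncomputable def laplacian {d : ℕ} (f : EuclideanSpace ℝ (Fin d) → ℝ)
    (x : EuclideanSpace ℝ (Fin d)) : ℝ :=
  ∑ i : Fin d,
    iteratedFDeriv ℝ 2 f x ![EuclideanSpace.single i 1, EuclideanSpace.single i 1]

/-!
Write `g y = (f y - f x) * P y`, so that the integrand is `g y - g x`. By Taylor's theorem,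
`g y - g x = Dg(x)(y - x) + ½ D²g(x)(y - x, y - x) + O(‖y - x‖³)`, and the remainder contributes
`O(h^{d+3})` to an integral over a ball of volume `O(h^d)`. The linear term integrates to zero by
the symmetry `z ↦ -z` of the ball. Reflecting and permuting coordinates shows that
`∫_{B_h} z_i z_j = δ_ij ∫_{B_h} ‖z‖² / d = δ_ij |S^{d-1}| h^{d+2} / (d (d+2))`, so the quadratic
term integrates to `½ Δg(x) |S^{d-1}| h^{d+2} / (d (d+2))`. Since `g` vanishes at `x`, the product
rule gives `Δg(x) = P(x) Δf(x) + 2 ⟨∇f(x), ∇P(x)⟩`.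
-/

section MeanValue

variable {E F : Type*} [NormedAddCommGroup E] [NormedSpace ℝ E] [NormedAddCommGroup F]
  [NormedSpace ℝ F] {x : E}

theorem isBigO_norm_sub_pow_succ_of_hasFDerivAt {R : E → F} {R' : E → E →L[ℝ] F} {n : ℕ}
    (hR : ∀ᶠ w in 𝓝 x, HasFDerivAt R (R' w) w) (hR' : R' =O[𝓝 x] fun w => ‖w - x‖ ^ n)
    (hRx : R x = 0) : R =O[𝓝 x] fun w => ‖w - x‖ ^ (n + 1) := by
  obtain ⟨C, hC, hCR'⟩ := hR'.exists_nonneg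
  obtain ⟨ε, hε, hball⟩ := eventually_nhds_iff_ball.1 (hR.and hCR'.bound)
  refine IsBigO.of_bound C (eventually_nhds_iff_ball.2 ⟨ε, hε, fun y hy => ?_⟩)
  set r := ‖y - x‖
  have hsub : closedBall x r ⊆ ball x ε :=
    closedBall_subset_ball (by rwa [mem_ball, dist_eq_norm] at hy)
  have hbound : ∀ w ∈ closedBall x r, ‖R' w‖ ≤ C * r ^ n := fun w hw => by
    have hwx : ‖w - x‖ ≤ r := by rwa [mem_closedBall, dist_eq_norm] at hw
    calc ‖R' w‖ ≤ C * ‖‖w - x‖ ^ n‖ := (hball w (hsub hw)).2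
      _ ≤ C * r ^ n := by rw [norm_pow, norm_norm]; gcongr
  have hmvt := (convex_closedBall x r).norm_image_sub_le_of_norm_hasFDerivWithin_le
    (fun w hw => (hball w (hsub hw)).1.hasFDerivWithinAt) hbound
    (mem_closedBall_self (norm_nonneg _)) (by rw [mem_closedBall, dist_eq_norm])
  rw [hRx, sub_zero] at hmvt
  rwa [norm_pow, norm_norm, pow_succ, ← mul_assoc]

theorem ContDiffAt.isBigO_sub_taylor_two {g : E → F} (hg : ContDiffAt ℝ 3 g x) :
    (fun y => g y - g x - fderiv ℝ g x (y - x)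
        - (2 : ℝ)⁻¹ • fderiv ℝ (fderiv ℝ g) x (y - x) (y - x))
      =O[𝓝 x] fun y => ‖y - x‖ ^ 3 := by
  set D2 := fderiv ℝ (fderiv ℝ g) x
  have hnear : ∀ᶠ w in 𝓝 x, ContDiffAt ℝ 3 g w := hg.eventually (by simp)
  have hsub : ∀ w, HasFDerivAt (fun y : E => y - x) (ContinuousLinearMap.id ℝ E) w :=
    fun w => (hasFDerivAt_id w).sub_const x
  have hDg : HasFDerivAt (fderiv ℝ (fderiv ℝ g)) (fderiv ℝ (fderiv ℝ (fderiv ℝ g)) x) x :=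
    (((hg.fderiv_right (m := 2) (by norm_num)).fderiv_right (m := 1) (by norm_num)).differentiableAt
      one_ne_zero).hasFDerivAt
  have hS : (fun w => fderiv ℝ g w - fderiv ℝ g x - D2 (w - x)) =O[𝓝 x]
      fun w => ‖w - x‖ ^ 2 := by
    refine isBigO_norm_sub_pow_succ_of_hasFDerivAt (R' := fun w => fderiv ℝ (fderiv ℝ g) w - D2)
      ?_ (by simpa using hDg.isBigO_sub.norm_right) (by simp)
    filter_upwards [hnear] with w hw
    have hDw := ((hw.fderiv_right (m := 2) (by norm_num)).differentiableAt
      (by norm_num)).hasFDerivAt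
    exact (hDw.sub_const _).sub (D2.hasFDerivAt.comp w (hsub w))
  -- By symmetry of `D2`, the remainder has derivative `Dg w - Dg x - D2 (w - x)` at `w`.
  refine isBigO_norm_sub_pow_succ_of_hasFDerivAt ?_ hS (by simp)
  filter_upwards [hnear] with w hw
  have hgw := (hw.differentiableAt (by norm_num)).hasFDerivAt
  have hquad := D2.hasFDerivAt_of_bilinear (hsub w) (hsub w)
  refine ((((hgw.sub_const (g x)).sub ((fderiv ℝ g x).hasFDerivAt.comp w (hsub w))).sub
    (hquad.const_smul (2 : ℝ)⁻¹))).congr_fderiv ?_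
  ext v
  have hsymm : D2 v (w - x) = D2 (w - x) v := hg.isSymmSndFDerivAt (by simp; norm_num) v (w - x)
  simp only [ContinuousLinearMap.comp_id, ContinuousLinearMap.precompR_apply,
    ContinuousLinearMap.compL_apply, sub_apply, add_apply,
    smul_apply, ContinuousLinearMap.precompL_apply,
    ContinuousLinearMap.id_apply, hsymm]
  module

end MeanValue

section BallIntegrals

open Set

variable {E F : Type*} [NormedAddCommGroup E] [NormedAddCommGroup F] [NormedSpace ℝ F]

theorem setIntegral_closedBall_comp_sub [MeasurableSpace E] [BorelSpace E] (μ : Measure E)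
    [μ.IsAddRightInvariant] (G : E → F) (x : E) (h : ℝ) :
    ∫ y in closedBall x h, G (y - x) ∂μ = ∫ z in closedBall 0 h, G z ∂μ := by
  have hpre : (· + x) ⁻¹' closedBall x h = closedBall (0 : E) h := by
    ext z
    simp [dist_eq_norm]
  rw [← (measurePreserving_add_right μ x).setIntegral_preimage_emb
    (Homeomorph.addRight x).measurableEmbedding, hpre]
  simp

variable [NormedSpace ℝ E] [MeasurableSpace E] [BorelSpace E] [FiniteDimensional ℝ E]
  (μ : Measure E) [μ.IsAddHaarMeasure]

theorem isBigO_setIntegral_closedBall {R : E → F} {x : E} {k : ℕ}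
    (hR : R =O[𝓝 x] fun y => ‖y - x‖ ^ k) :
    (fun h : ℝ => ∫ y in closedBall x h, R y ∂μ) =O[𝓝[>] 0]
      fun h => h ^ (Module.finrank ℝ E + k) := by
  obtain ⟨C, hC, hCR⟩ := hR.exists_nonneg
  obtain ⟨ε, hε, hball⟩ := nhds_basis_closedBall.eventually_iff.1 hCR.bound
  refine IsBigO.of_bound (C * μ.real (ball 0 1)) ?_
  filter_upwards [Ioo_mem_nhdsGT hε] with h ⟨hh0, hhε⟩
  have hpt : ∀ y ∈ closedBall x h, ‖R y‖ ≤ C * h ^ k := fun y hy => by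
    have hyx : ‖y - x‖ ≤ h := by rwa [mem_closedBall, dist_eq_norm] at hy
    calc ‖R y‖ ≤ C * ‖‖y - x‖ ^ k‖ := hball (closedBall_subset_closedBall hhε.le hy)
      _ ≤ C * h ^ k := by rw [norm_pow, norm_norm]; gcongr
  calc ‖∫ y in closedBall x h, R y ∂μ‖ ≤ C * h ^ k * μ.real (closedBall x h) :=
        norm_setIntegral_le_of_norm_le_const measure_closedBall_lt_top hpt
    _ = C * μ.real (ball 0 1) * ‖h ^ (Module.finrank ℝ E + k)‖ := by
        rw [μ.addHaar_real_closedBall x hh0.le, norm_pow, Real.norm_of_nonneg hh0.le, pow_add]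
        ring

theorem setIntegral_closedBall_norm_sq [Nontrivial E] {h : ℝ} (hh : 0 ≤ h) :
    ∫ z in closedBall (0 : E) h, ‖z‖ ^ 2 ∂μ =
      μ.toSphere.real univ * h ^ (Module.finrank ℝ E + 2) / (Module.finrank ℝ E + 2) := by
  set n := Module.finrank ℝ E
  have hn : 0 < n := Module.finrank_pos
  have hball : ∀ z : E, (Iic h).indicator (fun r : ℝ => r ^ 2) ‖z‖ =
      (closedBall 0 h).indicator (fun z => ‖z‖ ^ 2) z := fun z => by
    simp [indicator]
  have hrad : ∀ r ∈ Ioi (0 : ℝ), r ^ (n - 1) • (Iic h).indicator (fun r : ℝ => r ^ 2) r =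
      (Iic h).indicator (fun r => r ^ (n + 1)) r := fun r _ => by
    by_cases hr : r ∈ Iic h
    · simp only [indicator_of_mem hr, smul_eq_mul, ← pow_add]
      congr 1
      omega
    · simp [indicator_of_notMem hr]
  have hpolar := integral_fun_norm_addHaar μ ((Iic h).indicator fun r : ℝ => r ^ 2)
  simp only [hball, integral_indicator measurableSet_closedBall] at hpolar
  rw [hpolar, setIntegral_congr_fun measurableSet_Ioi hrad,
    setIntegral_indicator measurableSet_Iic, Ioi_inter_Iic,
    ← intervalIntegral.integral_of_le hh, integral_pow, μ.toSphere_real_apply_univ]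
  simp
  ring

end BallIntegrals

section EuclideanMoments

variable {E F : Type*} [NormedAddCommGroup E] [InnerProductSpace ℝ E] [FiniteDimensional ℝ E]
  [MeasurableSpace E] [BorelSpace E] [NormedAddCommGroup F] [NormedSpace ℝ F]

theorem setIntegral_closedBall_comp_linearIsometryEquiv (e : E ≃ₗᵢ[ℝ] E) (G : E → F) (h : ℝ) :
    ∫ z in closedBall 0 h, G (e z) = ∫ z in closedBall 0 h, G z := by
  have hpre : e ⁻¹' closedBall 0 h = closedBall 0 h := by
    ext z
    simp
  have := e.measurePreserving.setIntegral_preimage_emb e.toHomeomorph.measurableEmbedding G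
    (closedBall 0 h)
  rwa [hpre] at this

theorem setIntegral_closedBall_continuousLinearMap_eq_zero (L : E →L[ℝ] F) (h : ℝ) :
    ∫ z in closedBall (0 : E) h, L z = 0 := by
  have hneg := setIntegral_closedBall_comp_linearIsometryEquiv (.neg ℝ) (fun z => L z) h
  simp only [LinearIsometryEquiv.coe_neg, map_neg, integral_neg] at hneg
  linear_combination (norm := module) (-(2 : ℝ)⁻¹) • hneg

variable {ι : Type*} [Fintype ι]

namespace EuclideanSpace

theorem setIntegral_closedBall_coord_mul_coord_of_ne {i j : ι} (hij : i ≠ j) (h : ℝ) :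
    ∫ z in closedBall (0 : EuclideanSpace ℝ ι) h, z i * z j = 0 := by
  classical
  let e : EuclideanSpace ℝ ι ≃ₗᵢ[ℝ] EuclideanSpace ℝ ι := LinearIsometryEquiv.piLpCongrRight 2
    fun k => if k = i then LinearIsometryEquiv.neg ℝ else LinearIsometryEquiv.refl ℝ ℝ
  have he : ∀ z, e z i * e z j = -(z i * z j) := fun z => by
    simp [e, LinearIsometryEquiv.piLpCongrRight_apply, hij.symm]
  have hreflect := setIntegral_closedBall_comp_linearIsometryEquiv e (fun z => z i * z j) h
  simp only [he, integral_neg] at hreflect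
  linarith

theorem setIntegral_closedBall_coord_sq (i : ι) {h : ℝ} (hh : 0 ≤ h) :
    ∫ z in closedBall (0 : EuclideanSpace ℝ ι) h, z i ^ 2 =
      (volume : Measure (EuclideanSpace ℝ ι)).toSphere.real Set.univ * h ^ (Fintype.card ι + 2) /
        (Fintype.card ι * (Fintype.card ι + 2)) := by
  classical
  have : Nonempty ι := ⟨i⟩
  have hswap : ∀ j, ∫ z in closedBall (0 : EuclideanSpace ℝ ι) h, z j ^ 2 =
      ∫ z in closedBall (0 : EuclideanSpace ℝ ι) h, z i ^ 2 := fun j => by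
    rw [← setIntegral_closedBall_comp_linearIsometryEquiv
      (LinearIsometryEquiv.piLpCongrLeft 2 ℝ ℝ (Equiv.swap i j)) (fun z => z i ^ 2) h]
    simp [LinearIsometryEquiv.piLpCongrLeft_apply, Equiv.piCongrLeft'_apply]
  have hsum := setIntegral_closedBall_norm_sq (volume : Measure (EuclideanSpace ℝ ι)) hh
  simp only [EuclideanSpace.real_norm_sq_eq, finrank_euclideanSpace] at hsum
  rw [integral_finsetSum _ fun j _ => ContinuousOn.integrableOn_compact (isCompact_closedBall _ _)
    (by fun_prop)] at hsum
  simp only [hswap, Finset.sum_const, Finset.card_univ, nsmul_eq_mul] at hsum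
  rw [mul_comm (Fintype.card ι : ℝ), ← div_div, ← hsum, mul_div_cancel_left₀ _ (by positivity)]

theorem setIntegral_closedBall_apply_self [DecidableEq ι]
    (B : EuclideanSpace ℝ ι →L[ℝ] EuclideanSpace ℝ ι →L[ℝ] ℝ) {h : ℝ} (hh : 0 ≤ h) :
    ∫ z in closedBall (0 : EuclideanSpace ℝ ι) h, B z z =
      (∑ i, B (single i 1) (single i 1)) *
        ((volume : Measure (EuclideanSpace ℝ ι)).toSphere.real Set.univ *
          h ^ (Fintype.card ι + 2) / (Fintype.card ι * (Fintype.card ι + 2))) := by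
  set c := (volume : Measure (EuclideanSpace ℝ ι)).toSphere.real Set.univ *
    h ^ (Fintype.card ι + 2) / (Fintype.card ι * (Fintype.card ι + 2))
  have hmoment : ∀ i j : ι,
      ∫ z in closedBall (0 : EuclideanSpace ℝ ι) h, z i * z j = if i = j then c else 0 := by
    intro i j
    split_ifs with hij
    · subst hij
      simp only [← sq]
      exact setIntegral_closedBall_coord_sq i hh
    · exact setIntegral_closedBall_coord_mul_coord_of_ne hij h
  have hexpand : ∀ z : EuclideanSpace ℝ ι,
      B z z = ∑ j, ∑ i, z i * z j * B (single i 1) (single j 1) := fun z => by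
    conv_lhs => rw [← (basisFun ι ℝ).sum_repr z]
    simp only [basisFun_apply, basisFun_repr, map_sum, map_smul, FunLike.coe_sum,
      Finset.sum_apply, FunLike.coe_smul, Pi.smul_apply, smul_eq_mul, Finset.mul_sum]
    exact Finset.sum_congr rfl fun _ _ => Finset.sum_congr rfl fun _ _ => by ring
  have hint : ∀ i j, IntegrableOn (fun z : EuclideanSpace ℝ ι =>
      z i * z j * B (single i 1) (single j 1)) (closedBall 0 h) := fun i j =>
    ContinuousOn.integrableOn_compact (isCompact_closedBall _ _) (by fun_prop)
  rw [setIntegral_congr_fun measurableSet_closedBall fun z _ => hexpand z]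
  rw [integral_finsetSum _ fun j _ => integrable_finsetSum _ fun i _ => hint i j]
  simp_rw [integral_finsetSum _ fun i _ => hint i _, integral_mul_const, hmoment]
  simp only [ite_mul, zero_mul, Finset.sum_ite_eq', Finset.mem_univ, if_true,
    Finset.sum_mul]
  exact Finset.sum_congr rfl fun _ _ => mul_comm _ _

end EuclideanSpace

end EuclideanMoments

section Laplacian

theorem fderiv_fderiv_mul_apply {E : Type*} [NormedAddCommGroup E] [NormedSpace ℝ E]
    {f g : E → ℝ} {x : E} (hf : ContDiffAt ℝ 2 f x) (hg : ContDiffAt ℝ 2 g x) (v w : E) :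
    fderiv ℝ (fderiv ℝ fun y => f y * g y) x v w =
      f x * fderiv ℝ (fderiv ℝ g) x v w + fderiv ℝ f x v * fderiv ℝ g x w +
        fderiv ℝ f x w * fderiv ℝ g x v + g x * fderiv ℝ (fderiv ℝ f) x v w := by
  have hfirst : fderiv ℝ (fun y => f y * g y) =ᶠ[𝓝 x]
      fun y => f y • fderiv ℝ g y + g y • fderiv ℝ f y := by
    filter_upwards [hf.eventually (by simp), hg.eventually (by simp)] with y hfy hgy
    exact fderiv_mul (hfy.differentiableAt two_ne_zero) (hgy.differentiableAt two_ne_zero)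
  have hf' := ((hf.fderiv_right (m := 1) (by norm_num)).differentiableAt one_ne_zero).hasFDerivAt
  have hg' := ((hg.fderiv_right (m := 1) (by norm_num)).differentiableAt one_ne_zero).hasFDerivAt
  have hsecond : HasFDerivAt (fun y => f y • fderiv ℝ g y + g y • fderiv ℝ f y) _ x :=
    ((hf.differentiableAt two_ne_zero).hasFDerivAt.smul hg').add
    ((hg.differentiableAt two_ne_zero).hasFDerivAt.smul hf')
  rw [hfirst.fderiv_eq, hsecond.fderiv]
  simp only [add_apply, ContinuousLinearMap.smulRight_apply, smul_apply, smul_eq_mul]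
  ring

theorem EuclideanSpace.inner_gradient_eq_sum {ι : Type*} [Fintype ι] [DecidableEq ι]
    (f g : EuclideanSpace ℝ ι → ℝ) (x : EuclideanSpace ℝ ι) :
    ⟪gradient f x, gradient g x⟫ = ∑ i, fderiv ℝ f x (single i 1) * fderiv ℝ g x (single i 1) := by
  have hcoord : ∀ (q : EuclideanSpace ℝ ι → ℝ) i, gradient q x i = fderiv ℝ q x (single i 1) :=
    fun q i => by
      rw [← toDual_gradient, InnerProductSpace.toDual_apply_apply, inner_single_right]
      simp
  simp only [PiLp.inner_apply, hcoord, RCLike.inner_apply, conj_trivial]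
  exact Finset.sum_congr rfl fun _ _ => mul_comm _ _

variable {d : ℕ}

theorem laplacian_eq_sum_fderiv_fderiv (f : EuclideanSpace ℝ (Fin d) → ℝ)
    (x : EuclideanSpace ℝ (Fin d)) :
    laplacian f x = ∑ i, fderiv ℝ (fderiv ℝ f) x (EuclideanSpace.single i 1)
      (EuclideanSpace.single i 1) := by
  simp [laplacian, iteratedFDeriv_two_apply]

theorem laplacian_mul {f g : EuclideanSpace ℝ (Fin d) → ℝ} {x : EuclideanSpace ℝ (Fin d)}
    (hf : ContDiffAt ℝ 2 f x) (hg : ContDiffAt ℝ 2 g x) :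
    laplacian (fun y => f y * g y) x =
      f x * laplacian g x + 2 * ⟪gradient f x, gradient g x⟫ + g x * laplacian f x := by
  simp only [laplacian_eq_sum_fderiv_fderiv, fderiv_fderiv_mul_apply hf hg,
    EuclideanSpace.inner_gradient_eq_sum, Finset.sum_add_distrib, ← Finset.mul_sum]
  ring

theorem laplacian_sub_const (f : EuclideanSpace ℝ (Fin d) → ℝ) (c : ℝ)
    (x : EuclideanSpace ℝ (Fin d)) : laplacian (fun y => f y - c) x = laplacian f x := by
  have hderiv : fderiv ℝ (fun y => f y - c) = fderiv ℝ f := funext fun _ => fderiv_sub_const c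
  simp only [laplacian_eq_sum_fderiv_fderiv, hderiv]

theorem gradient_sub_const {E : Type*} [NormedAddCommGroup E] [InnerProductSpace ℝ E]
    [CompleteSpace E] (f : E → ℝ) (c : ℝ) (x : E) :
    gradient (fun y => f y - c) x = gradient f x := by
  simp [gradient, fderiv_sub_const]

end Laplacian

theorem ContDiffAt.isBigO_setIntegral_closedBall_sub {d : ℕ} {g : EuclideanSpace ℝ (Fin d) → ℝ}
    {x : EuclideanSpace ℝ (Fin d)} (hg : ContDiffAt ℝ 3 g x) :
    (fun h : ℝ => (∫ y in closedBall x h, (g y - g x))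
        - sphereArea d / (d * (d + 2)) * ((1 / 2) * laplacian g x) * h ^ (d + 2))
      =O[𝓝[>] (0 : ℝ)] fun h => h ^ (d + 3) := by
  set A := fderiv ℝ g x
  set D2 := fderiv ℝ (fderiv ℝ g) x
  set T : EuclideanSpace ℝ (Fin d) → ℝ := fun z => A z + (2 : ℝ)⁻¹ • D2 z z
  have hremainder := isBigO_setIntegral_closedBall volume hg.isBigO_sub_taylor_two
  rw [finrank_euclideanSpace_fin] at hremainder
  obtain ⟨ε, hε, hsmooth⟩ := nhds_basis_closedBall.eventually_iff.1 (hg.eventually (by simp))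
  refine hremainder.congr' ?_ EventuallyEq.rfl
  filter_upwards [Ioo_mem_nhdsGT hε] with h ⟨hh0, hhε⟩
  have hgint : IntegrableOn (fun y => g y - g x) (closedBall x h) :=
    ContinuousOn.integrableOn_compact (isCompact_closedBall _ _) fun y hy =>
      ((hsmooth (closedBall_subset_closedBall hhε.le hy)).continuousAt.sub
        continuousAt_const).continuousWithinAt
  have hTint : IntegrableOn (fun y => T (y - x)) (closedBall x h) :=
    ContinuousOn.integrableOn_compact (isCompact_closedBall _ _) (by fun_prop)
  have hmodel : ∫ y in closedBall x h, T (y - x) =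
      sphereArea d / (d * (d + 2)) * ((1 / 2) * laplacian g x) * h ^ (d + 2) := by
    rw [setIntegral_closedBall_comp_sub volume T x h, integral_add, integral_smul,
      setIntegral_closedBall_continuousLinearMap_eq_zero,
      EuclideanSpace.setIntegral_closedBall_apply_self D2 hh0.le, laplacian_eq_sum_fderiv_fderiv]
    · simp [sphereArea, measureReal_def]
      ring
    all_goals exact ContinuousOn.integrableOn_compact (isCompact_closedBall _ _) (by fun_prop)
  rw [← hmodel, ← integral_sub hgint hTint]
  simp only [T, sub_sub, add_assoc]
  rfl

theorem local_moment_expansion_function_flat_general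
    (d : ℕ) (Ω : Set (EuclideanSpace ℝ (Fin d))) (hΩ : IsOpen Ω)
    (x : EuclideanSpace ℝ (Fin d)) (hx : x ∈ Ω)
    (f P : EuclideanSpace ℝ (Fin d) → ℝ)
    (hf : ContDiffOn ℝ 3 f Ω) (hP : ContDiffOn ℝ 3 P Ω) :
    (fun h : ℝ =>
        (∫ y in closedBall x h, (f y - f x) * P y)
          - sphereArea d / (d * (d + 2)) *
              ((1 / 2) * P x * laplacian f x + ⟪gradient f x, gradient P x⟫) *
              h ^ (d + 2))
      =O[𝓝[>] (0 : ℝ)] fun h => h ^ (d + 3) := by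
  have hfx : ContDiffAt ℝ 3 (fun y => f y - f x) x :=
    (hf.contDiffAt (hΩ.mem_nhds hx)).sub contDiffAt_const
  have hPx : ContDiffAt ℝ 3 P x := hP.contDiffAt (hΩ.mem_nhds hx)
  have hlap : (1 / 2) * laplacian (fun y => (f y - f x) * P y) x =
      (1 / 2) * P x * laplacian f x + ⟪gradient f x, gradient P x⟫ := by
    rw [laplacian_mul (hfx.of_le (by norm_num)) (hPx.of_le (by norm_num)), laplacian_sub_const,
      gradient_sub_const]
    ring
  have hexpansion := (hfx.mul hPx).isBigO_setIntegral_closedBall_sub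
  simp only [sub_self, zero_mul, sub_zero, hlap] at hexpansion
  exact hexpansion

/-- As `h → 0⁺`,
`∫_{B_h(x)} (f(y) − f(x))·P(y) dy
  = (|S^{d-1}|/(d(d+2)))·((1/2)·P(x)·Δf(x) + ⟨∇f(x), ∇P(x)⟩)·h^{d+2} + O(h^{d+3})`. -/
theorem local_moment_expansion_function_flat
    (d : ℕ) (hd : 1 ≤ d) (Ω : Set (EuclideanSpace ℝ (Fin d))) (hΩ : IsOpen Ω)
    (x : EuclideanSpace ℝ (Fin d)) (hx : x ∈ Ω)
    (f P : EuclideanSpace ℝ (Fin d) → ℝ)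
    (hf : ContDiffOn ℝ 3 f Ω) (hP : ContDiffOn ℝ 3 P Ω) :
    (fun h : ℝ =>
        (∫ y in closedBall x h, (f y - f x) * P y)
          - sphereArea d / (d * (d + 2)) *
              ((1 / 2) * P x * laplacian f x + ⟪gradient f x, gradient P x⟫) *
              h ^ (d + 2))
      =O[𝓝[>] (0 : ℝ)] fun h => h ^ (d + 3) :=
  local_moment_expansion_function_flat_general d Ω hΩ x hx f P hf hP
end

section
/- Let d ≥ 1, let Ω ⊆ ℝ^d be open, let x ∈ Ω, and let f, P : Ω → ℝ be twice continuously differentiable. Then, as h → 0⁺, ∫_{B_h(x)} (y − x)·(f(y) − f(x))·P(y) dy = (|S^{d-1}|/(d(d+2)))·h^{d+2}·P(x)·∇f(x) + O(h^{d+3}) (as vectors in ℝ^d). -/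
open Asymptotics Filter Topology MeasureTheory Metric

/-!
Put `g y = (f y - f x) * P y` and `v = P x • ∇f x`. Then `g x = 0` and `Dg(x) = ⟪v, ·⟫`, so
Taylor's theorem gives `g y = ⟪v, y - x⟫ + O(‖y - x‖²)`; integrated against `y - x` over
`B_h(x)`, the remainder contributes `O(h² · h · h^d)`. The main term is the second moment
`∫_{B_h(0)} ⟪v, w⟫ w dw`. Coordinate reflections kill its off-diagonal entries and coordinate
swaps make the diagonal ones equal, so it is `(1/d) (∫_{B_h(0)} ‖w‖² dw) • v`, and polar
coordinates give `∫_{B_h(0)} ‖w‖² dw = |S^{d-1}| h^{d+2} / (d + 2)`.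
-/

open Module Set RealInnerProductSpace

theorem ContDiffAt.isBigO_sub_sub_fderiv {E F : Type*} [NormedAddCommGroup E]
    [NormedSpace ℝ E] [NormedAddCommGroup F] [NormedSpace ℝ F] {g : E → F} {x : E}
    (hg : ContDiffAt ℝ 2 g x) :
    (fun y => g y - g x - fderiv ℝ g x (y - x)) =O[𝓝 x] fun y => ‖y - x‖ ^ 2 := by
  have hdiff : ∀ᶠ y in 𝓝 x, DifferentiableAt ℝ g y :=
    (hg.eventually (by simp)).mono fun y hy => hy.differentiableAt (by norm_num)
  have hlip : (fun y => fderiv ℝ g y - fderiv ℝ g x) =O[𝓝 x] (· - x) :=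
    ((hg.fderiv_right (m := 1) le_rfl).differentiableAt one_ne_zero).isBigO_sub
  obtain ⟨C, hC0, hC⟩ := hlip.exists_nonneg
  obtain ⟨r, hr, hball⟩ := eventually_nhds_iff_ball.1 (hdiff.and hC.bound)
  refine .of_bound C ?_
  filter_upwards [ball_mem_nhds x hr] with y hy
  have hsub : closedBall x ‖y - x‖ ⊆ ball x r :=
    closedBall_subset_ball (by rwa [← dist_eq_norm, ← mem_ball])
  have hmvt := (convex_closedBall x ‖y - x‖).norm_image_sub_le_of_norm_fderiv_le' (y := y)
    (fun z hz => (hball z (hsub hz)).1)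
    (fun z hz => (hball z (hsub hz)).2.trans
      (mul_le_mul_of_nonneg_left (by simpa [dist_eq_norm] using hz) hC0))
    (mem_closedBall_self (norm_nonneg _)) (by simp [dist_eq_norm])
  simpa [sq, mul_assoc] using hmvt

theorem Asymptotics.IsBigO.setIntegral_closedBall {E F : Type*} [NormedAddCommGroup E]
    [NormedSpace ℝ E] [FiniteDimensional ℝ E] [MeasurableSpace E] [BorelSpace E]
    [NormedAddCommGroup F] [NormedSpace ℝ F] (μ : Measure E) [μ.IsAddHaarMeasure]
    {g : E → F} {x : E} {k : ℕ} (hg : g =O[𝓝 x] fun y => ‖y - x‖ ^ k) :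
    (fun h => ∫ y in closedBall x h, g y ∂μ) =O[𝓝[>] 0]
      fun h => h ^ (finrank ℝ E + k) := by
  obtain ⟨C, hC0, hC⟩ := hg.exists_nonneg
  obtain ⟨r, hr, hball⟩ := eventually_nhds_iff_ball.1 hC.bound
  refine .of_bound (C * μ.real (ball 0 1)) ?_
  filter_upwards [Ioo_mem_nhdsGT hr] with h ⟨hh0, hhr⟩
  have hbound : ∀ y ∈ closedBall x h, ‖g y‖ ≤ C * h ^ k := fun y hy => by
    have hyx : ‖y - x‖ ≤ h := by rwa [← dist_eq_norm, ← mem_closedBall]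
    refine (hball y (by rw [mem_ball, dist_eq_norm]; linarith)).trans ?_
    rw [norm_pow, _root_.norm_norm]
    gcongr
  calc ‖∫ y in closedBall x h, g y ∂μ‖ ≤ C * h ^ k * μ.real (closedBall x h) :=
        norm_setIntegral_le_of_norm_le_const measure_closedBall_lt_top hbound
    _ = C * μ.real (ball 0 1) * ‖h ^ (finrank ℝ E + k)‖ := by
        rw [μ.addHaar_real_closedBall x hh0.le, norm_pow, Real.norm_of_nonneg hh0.le, pow_add]
        ring

theorem setIntegral_closedBall_comp_sub_right {E F : Type*} [NormedAddCommGroup E]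
    [MeasurableSpace E] [BorelSpace E] [NormedAddCommGroup F] [NormedSpace ℝ F]
    (μ : Measure E) [μ.IsAddRightInvariant] (g : E → F) (x : E) (r : ℝ) :
    ∫ y in closedBall x r, g (y - x) ∂μ = ∫ w in closedBall 0 r, g w ∂μ := by
  have hpre : (· - x) ⁻¹' closedBall 0 r = closedBall x r := by
    ext y; simp [dist_eq_norm]
  rw [← hpre]
  exact (measurePreserving_sub_right μ x).setIntegral_preimage_emb
    (measurableEmbedding_subRight x) g _

theorem setIntegral_closedBall_comp_linearIsometryEquiv_s11 {E F : Type*}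
    [NormedAddCommGroup E] [InnerProductSpace ℝ E] [FiniteDimensional ℝ E] [MeasurableSpace E]
    [BorelSpace E] [NormedAddCommGroup F] [NormedSpace ℝ F] (T : E ≃ₗᵢ[ℝ] E) (g : E → F)
    (r : ℝ) : ∫ w in closedBall 0 r, g (T w) = ∫ w in closedBall 0 r, g w := by
  have hpre : T ⁻¹' closedBall 0 r = closedBall 0 r := by simp
  have := T.measurePreserving.setIntegral_preimage_emb T.toHomeomorph.measurableEmbedding g
    (closedBall 0 r)
  rwa [hpre] at this

theorem setIntegral_closedBall_norm_sq_s11 {E : Type*} [NormedAddCommGroup E] [NormedSpace ℝ E]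
    [FiniteDimensional ℝ E] [MeasurableSpace E] [BorelSpace E] (μ : Measure E)
    [μ.IsAddHaarMeasure] {r : ℝ} (hr : 0 ≤ r) :
    ∫ w in closedBall (0 : E) r, ‖w‖ ^ 2 ∂μ
      = μ.toSphere.real univ * r ^ (finrank ℝ E + 2) / (finrank ℝ E + 2) := by
  rcases subsingleton_or_nontrivial E with hE | hE
  · simp [Subsingleton.elim _ (0 : E), finrank_zero_of_subsingleton]
  have hradial : (closedBall (0 : E) r).indicator (‖·‖ ^ 2)
      = fun w => (Iic r).indicator (· ^ 2) ‖w‖ := by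
    ext w; simp [indicator]
  rw [← integral_indicator measurableSet_closedBall, hradial, integral_fun_norm_addHaar,
    Measure.toSphere_real_apply_univ]
  obtain ⟨n, hn⟩ := Nat.exists_eq_succ_of_ne_zero (finrank_pos (R := ℝ) (M := E)).ne'
  rw [hn]
  have hIoc : ∫ y in Ioi (0 : ℝ), y ^ (n.succ - 1) • (Iic r).indicator (· ^ 2) y
      = ∫ y in (0 : ℝ)..r, y ^ (n + 2) := by
    have hpow : ∀ y : ℝ, y ^ (n.succ - 1) • (Iic r).indicator (· ^ 2) y
        = (Iic r).indicator (· ^ (n + 2)) y := fun y => by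
      by_cases hy : y ≤ r <;> simp [hy, pow_add]
    simp_rw [hpow]
    rw [setIntegral_indicator measurableSet_Iic, Ioi_inter_Iic,
      intervalIntegral.integral_of_le hr]
  rw [hIoc, integral_pow]
  simp only [nsmul_eq_mul, smul_eq_mul]
  push_cast
  field_simp
  ring

section Coordinates

variable {ι : Type*} [Fintype ι]

theorem setIntegral_closedBall_mul_eq_zero {i j : ι} (hij : i ≠ j) (r : ℝ) :
    ∫ w in closedBall (0 : EuclideanSpace ℝ ι) r, w i * w j = 0 := by
  classical
  let T : EuclideanSpace ℝ ι ≃ₗᵢ[ℝ] EuclideanSpace ℝ ι := LinearIsometryEquiv.piLpCongrRight 2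
    fun k => if k = i then LinearIsometryEquiv.neg ℝ else LinearIsometryEquiv.refl ℝ ℝ
  have hodd : ∀ w, T w i * T w j = -(w i * w j) := fun w => by
    simp [T, if_neg hij.symm]
  have := setIntegral_closedBall_comp_linearIsometryEquiv_s11 T (fun w => w i * w j) r
  simp only [hodd, integral_neg] at this
  linarith

theorem setIntegral_closedBall_sq_eq (i j : ι) (r : ℝ) :
    ∫ w in closedBall (0 : EuclideanSpace ℝ ι) r, w i ^ 2
      = ∫ w in closedBall (0 : EuclideanSpace ℝ ι) r, w j ^ 2 := by
  classical
  let T : EuclideanSpace ℝ ι ≃ₗᵢ[ℝ] EuclideanSpace ℝ ι :=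
    LinearIsometryEquiv.piLpCongrLeft 2 ℝ ℝ (Equiv.swap i j)
  have hswap : ∀ w, T w i = w j := fun w => by
    simp [T, LinearIsometryEquiv.piLpCongrLeft_apply, Equiv.piCongrLeft'_apply]
  simpa [hswap] using (setIntegral_closedBall_comp_linearIsometryEquiv_s11 T (fun w => w i ^ 2) r).symm

end Coordinates

theorem setIntegral_closedBall_sq {d : ℕ} (i : Fin d) {r : ℝ} (hr : 0 ≤ r) :
    ∫ w in closedBall (0 : EuclideanSpace ℝ (Fin d)) r, w i ^ 2
      = sphereArea d / (d * (d + 2)) * r ^ (d + 2) := by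
  have hsum : ∑ j : Fin d, ∫ w in closedBall (0 : EuclideanSpace ℝ (Fin d)) r, w j ^ 2
      = sphereArea d * r ^ (d + 2) / (d + 2) := by
    rw [← integral_finsetSum _ fun j _ => (by fun_prop : Continuous fun w :
      EuclideanSpace ℝ (Fin d) => w j ^ 2).locallyIntegrable.integrableOn_isCompact
      (isCompact_closedBall _ _)]
    simp_rw [← EuclideanSpace.real_norm_sq_eq]
    rw [setIntegral_closedBall_norm_sq_s11 volume hr, finrank_euclideanSpace_fin]
    rfl
  rw [Finset.sum_congr rfl fun j _ => setIntegral_closedBall_sq_eq j i r, Finset.sum_const,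
    Finset.card_univ, Fintype.card_fin, nsmul_eq_mul] at hsum
  have hd : (0 : ℝ) < d := Nat.cast_pos.2 i.pos
  field_simp at hsum ⊢
  linarith

theorem setIntegral_closedBall_inner_smul {d : ℕ} (v : EuclideanSpace ℝ (Fin d)) {r : ℝ}
    (hr : 0 ≤ r) :
    ∫ w in closedBall (0 : EuclideanSpace ℝ (Fin d)) r, ⟪v, w⟫ • w
      = (sphereArea d / (d * (d + 2)) * r ^ (d + 2)) • v := by
  ext i
  rw [eval_integral_piLp fun j => (by fun_prop : Continuous fun w :
      EuclideanSpace ℝ (Fin d) => (⟪v, w⟫ • w) j).locallyIntegrable.integrableOn_isCompact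
      (isCompact_closedBall _ _)]
  have hexpand : ∀ w : EuclideanSpace ℝ (Fin d), (⟪v, w⟫ • w) i = ∑ j, v j * (w j * w i) :=
    fun w => by
      simp only [PiLp.smul_apply, smul_eq_mul, PiLp.inner_apply, RCLike.inner_apply,
        conj_trivial, Finset.sum_mul]
      exact Finset.sum_congr rfl fun j _ => by ring
  simp_rw [hexpand]
  rw [integral_finsetSum _ fun j _ => ((by fun_prop : Continuous fun w :
      EuclideanSpace ℝ (Fin d) => w j * w i).locallyIntegrable.integrableOn_isCompact
      (isCompact_closedBall _ _)).const_mul _]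
  simp_rw [integral_const_mul]
  rw [Finset.sum_eq_single i
    (fun j _ hji => by rw [setIntegral_closedBall_mul_eq_zero hji, mul_zero]) (by simp)]
  simp_rw [← sq, setIntegral_closedBall_sq i hr]
  simp [mul_comm]

theorem setIntegral_closedBall_inner_sub_smul_sub {d : ℕ} (v x : EuclideanSpace ℝ (Fin d))
    {r : ℝ} (hr : 0 ≤ r) :
    ∫ y in closedBall x r, ⟪v, y - x⟫ • (y - x)
      = (sphereArea d / (d * (d + 2)) * r ^ (d + 2)) • v := by
  rw [setIntegral_closedBall_comp_sub_right volume (fun w => ⟪v, w⟫ • w),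
    setIntegral_closedBall_inner_smul v hr]

theorem setIntegral_closedBall_sub_inner_smul_sub {d : ℕ} {g : EuclideanSpace ℝ (Fin d) → ℝ}
    (v x : EuclideanSpace ℝ (Fin d)) {r : ℝ} (hr : 0 ≤ r) (hg : ContinuousOn g (closedBall x r)) :
    ∫ y in closedBall x r, (g y - ⟪v, y - x⟫) • (y - x)
      = (∫ y in closedBall x r, g y • (y - x))
          - (sphereArea d / (d * (d + 2)) * r ^ (d + 2)) • v := by
  have hint : IntegrableOn (fun y => g y • (y - x)) (closedBall x r) :=
    (hg.smul (by fun_prop)).integrableOn_compact (isCompact_closedBall x r)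
  have hint' : IntegrableOn (fun y => ⟪v, y - x⟫ • (y - x)) (closedBall x r) :=
    (by fun_prop : Continuous fun y => ⟪v, y - x⟫ • (y - x)).locallyIntegrable
      |>.integrableOn_isCompact (isCompact_closedBall x r)
  simp_rw [sub_smul]
  rw [integral_sub hint hint', setIntegral_closedBall_inner_sub_smul_sub v x hr]

theorem hasFDerivAt_sub_apply_mul {E : Type*} [NormedAddCommGroup E] [NormedSpace ℝ E]
    {f P : E → ℝ} {x : E} (hf : DifferentiableAt ℝ f x) (hP : DifferentiableAt ℝ P x) :
    HasFDerivAt (fun y => (f y - f x) * P y) (P x • fderiv ℝ f x) x :=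
  ((hf.hasFDerivAt.sub_const (f x)).mul hP.hasFDerivAt).congr_fderiv (by simp)

theorem local_mixed_moment_expansion_flat_general
    (d : ℕ) (Ω : Set (EuclideanSpace ℝ (Fin d))) (hΩ : IsOpen Ω)
    (x : EuclideanSpace ℝ (Fin d)) (hx : x ∈ Ω)
    (f P : EuclideanSpace ℝ (Fin d) → ℝ)
    (hf : ContDiffOn ℝ 2 f Ω) (hP : ContDiffOn ℝ 2 P Ω) :
    (fun h : ℝ =>
        (∫ y in closedBall x h, ((f y - f x) * P y) • (y - x))
          - (sphereArea d / (d * (d + 2)) * h ^ (d + 2) * P x) • gradient f x)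
      =O[𝓝[>] (0 : ℝ)] fun h => h ^ (d + 3) := by
  have hΩx : Ω ∈ 𝓝 x := hΩ.mem_nhds hx
  set g := fun y => (f y - f x) * P y
  set v := P x • gradient f x
  have hgΩ : ContDiffOn ℝ 2 g Ω := (hf.sub contDiffOn_const).mul hP
  have hderiv : ∀ w, fderiv ℝ g x w = ⟪v, w⟫ := fun w => by
    rw [(hasFDerivAt_sub_apply_mul ((hf.contDiffAt hΩx).differentiableAt two_ne_zero)
      ((hP.contDiffAt hΩx).differentiableAt two_ne_zero)).fderiv]
    simp [v, real_inner_smul_left, inner_gradient_left]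
  have htaylor : (fun y => g y - ⟪v, y - x⟫) =O[𝓝 x] fun y => ‖y - x‖ ^ 2 := by
    simpa [g, hderiv] using (hgΩ.contDiffAt hΩx).isBigO_sub_sub_fderiv
  have hremainder : (fun y => (g y - ⟪v, y - x⟫) • (y - x)) =O[𝓝 x] fun y => ‖y - x‖ ^ 3 :=
    (htaylor.smul (isBigO_norm_right.2 (isBigO_refl (· - x) _))).congr_right
      fun y => by simp [pow_succ]
  refine ((hremainder.setIntegral_closedBall volume).congr_right fun h => by simp).congr' ?_ .rfl
  obtain ⟨r, hr, hrΩ⟩ := nhds_basis_closedBall.mem_iff.1 hΩx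
  filter_upwards [Ioc_mem_nhdsGT hr] with h ⟨hh0, hhr⟩
  rw [setIntegral_closedBall_sub_inner_smul_sub v x hh0.le
    (hgΩ.continuousOn.mono ((closedBall_subset_closedBall hhr).trans hrΩ)), smul_smul]

/-- As `h → 0⁺`,
`∫_{B_h(x)} (y − x)·(f(y) − f(x))·P(y) dy
  = (|S^{d-1}|/(d(d+2)))·h^{d+2}·P(x)·∇f(x) + O(h^{d+3})` as vectors in `ℝ^d`. -/
theorem local_mixed_moment_expansion_flat
    (d : ℕ) (hd : 1 ≤ d) (Ω : Set (EuclideanSpace ℝ (Fin d))) (hΩ : IsOpen Ω)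
    (x : EuclideanSpace ℝ (Fin d)) (hx : x ∈ Ω)
    (f P : EuclideanSpace ℝ (Fin d) → ℝ)
    (hf : ContDiffOn ℝ 2 f Ω) (hP : ContDiffOn ℝ 2 P Ω) :
    (fun h : ℝ =>
        (∫ y in closedBall x h, ((f y - f x) * P y) • (y - x))
          - (sphereArea d / (d * (d + 2)) * h ^ (d + 2) * P x) • gradient f x)
      =O[𝓝[>] (0 : ℝ)] fun h => h ^ (d + 3) :=
  local_mixed_moment_expansion_flat_general d Ω hΩ x hx f P hf hP
end
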